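/- arXiv:2304.14748 — 2 statements merged into one kernel-verified Lean document; each statement's English description precedes it below -/
import Mathlib

section
/- Let $c_2 > 1$ be the absolute constant for which $n^{\star}(\varepsilon, d; \Lambda^{\rm std}) \leq 2 c_1\, n^{\star}(\varepsilon/c_2, d; \Lambda^{\rm all})$ holds (for some absolute constant $c_1 \in \mathbb{N}$). Then the exponents of quasi-polynomial tractability of ${\rm APP} = \{{\rm APP}_{\infty,d}\}$ satisfy, for $\star \in \{{\rm ABS}, {\rm NOR}\}$: ${\rm EXP}\text{-}t^{\star}(\Lambda^{\rm all}) \leq {\rm EXP}\text{-}t^{\star}(\Lambda^{\rm std}) \leq (1 + \ln(\ln c_2 + 1))\, {\rm EXP}\text{-}t^{\star}(\Lambda^{\rm all})$ and ${\rm ALG}\text{-}t^{\star}(\Lambda^{\rm all}) \leq {\rm ALG}\text{-}t^{\star}(\Lambda^{\rm std}) \leq (1 + \ln c_2)\, {\rm ALG}\text{-}t^{\star}(\Lambda^{\rm all})$. -/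
open Filter
open scoped ENNReal NNReal

noncomputable section

/-- Coefficient space: `ℓ²` sequences indexed by `ℤ^d`.  An element `u` represents the
function `f ∈ H^ω(𝕋^d)` with Fourier coefficients `f̂(k) = u k / ω k`, so that
`‖u‖_{ℓ²} = ‖f‖_{H^ω}`. -/
abbrev Coef (d : ℕ) := lp (fun _ : Fin d → ℤ => ℂ) 2

/-- The periodic function represented by the coefficients `u`:
`f(x) = ∑_{k ∈ ℤ^d} (u k / ω k) e^{2πi k·x}`. -/
def torusFn {d : ℕ} (ω : (Fin d → ℤ) → ℝ) (u : Coef d) (x : Fin d → ℝ) : ℂ :=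
  ∑' k : Fin d → ℤ,
    ((ω k : ℂ))⁻¹ * u k * Complex.exp (2 * Real.pi * Complex.I * ∑ j, (k j : ℂ) * (x j : ℂ))

/-- The torus `𝕋^d`, modelled as the cube `[0,1]^d`. -/
def cube (d : ℕ) : Set (Fin d → ℝ) := {x | ∀ j, x j ∈ Set.Icc (0 : ℝ) 1}

/-- Standard information: point-evaluation functionals `f ↦ f(x)`. -/
def stdInfo {d : ℕ} (ω : (Fin d → ℤ) → ℝ) : Set (Coef d → ℂ) :=
  {L | ∃ x ∈ cube d, L = fun u => torusFn ω u x}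

/-- General linear information: all continuous linear functionals on `H^ω`. -/
def allInfo (d : ℕ) : Set (Coef d → ℂ) := {L | ∃ T : Coef d →L[ℂ] ℂ, L = ⇑T}

/-- The `n`-th minimal worst case error `e(n, APP_{∞,d}; Λ)` of `L_∞`-approximation on the
unit ball of `H^ω(𝕋^d)`, using algorithms `f ↦ φ(L₁ f, …, Lₙ f)` with `Lᵢ ∈ Λ`. -/
def wcErr {d : ℕ} (ω : (Fin d → ℤ) → ℝ) (Λ : Set (Coef d → ℂ)) (n : ℕ) : ℝ≥0∞ :=
  ⨅ (L : Fin n → Coef d → ℂ) (_ : ∀ i, L i ∈ Λ) (φ : (Fin n → ℂ) → (Fin d → ℝ) → ℂ),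
    ⨆ (u : Coef d) (_ : ‖u‖ ≤ 1) (x : Fin d → ℝ) (_ : x ∈ cube d),
      (‖torusFn ω u x - φ (fun i => L i u) x‖₊ : ℝ≥0∞)

/-- The initial error `e(0, APP_{∞,d}) = sup_{‖f‖_{H^ω} ≤ 1} ‖f‖_∞`. -/
def initErr {d : ℕ} (ω : (Fin d → ℤ) → ℝ) : ℝ≥0∞ :=
  ⨆ (u : Coef d) (_ : ‖u‖ ≤ 1) (x : Fin d → ℝ) (_ : x ∈ cube d),
    (‖torusFn ω u x‖₊ : ℝ≥0∞)

/-- The error criterion: absolute (ABS) or normalized (NOR). -/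
inductive Crit | ABS | NOR

/-- `CRI_d`: the normalizing quantity of the error criterion. -/
def CRI {d : ℕ} (ω : (Fin d → ℤ) → ℝ) : Crit → ℝ≥0∞
  | Crit.ABS => 1
  | Crit.NOR => initErr ω

/-- The information complexity `n^⋆(ε, d; Λ)`. -/
def infoComp {d : ℕ} (ω : (Fin d → ℤ) → ℝ) (Λ : Set (Coef d → ℂ)) (crit : Crit) (ε : ℝ) : ℕ :=
  sInf {n : ℕ | wcErr ω Λ n ≤ ENNReal.ofReal ε * CRI ω crit}

/-- Algebraic strong polynomial tractability of the family of information complexities `nc`. -/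
def ALGSPT (nc : ℕ → ℝ → ℕ) : Prop :=
  ∃ C > (0:ℝ), ∃ p ≥ (0:ℝ), ∀ d : ℕ, 0 < d → ∀ ε ∈ Set.Ioo (0:ℝ) 1,
    (nc d ε : ℝ) ≤ C * ε ^ (-p)

/-- The exponent of algebraic strong polynomial tractability. -/
def ALGSPTexp (nc : ℕ → ℝ → ℕ) : ℝ :=
  sInf {p : ℝ | 0 ≤ p ∧ ∃ C > (0:ℝ), ∀ d : ℕ, 0 < d → ∀ ε ∈ Set.Ioo (0:ℝ) 1,
    (nc d ε : ℝ) ≤ C * ε ^ (-p)}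

/-- Algebraic polynomial tractability. -/
def ALGPT (nc : ℕ → ℝ → ℕ) : Prop :=
  ∃ C > (0:ℝ), ∃ p ≥ (0:ℝ), ∃ q ≥ (0:ℝ), ∀ d : ℕ, 0 < d → ∀ ε ∈ Set.Ioo (0:ℝ) 1,
    (nc d ε : ℝ) ≤ C * (d : ℝ) ^ q * ε ^ (-p)

/-- Algebraic quasi-polynomial tractability. -/
def ALGQPT (nc : ℕ → ℝ → ℕ) : Prop :=
  ∃ C > (0:ℝ), ∃ t ≥ (0:ℝ), ∀ d : ℕ, 0 < d → ∀ ε ∈ Set.Ioo (0:ℝ) 1,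
    (nc d ε : ℝ) ≤ C * Real.exp (t * (1 + Real.log d) * (1 + Real.log ε⁻¹))

/-- The exponent of algebraic quasi-polynomial tractability. -/
def ALGQPTexp (nc : ℕ → ℝ → ℕ) : ℝ :=
  sInf {t : ℝ | 0 ≤ t ∧ ∃ C > (0:ℝ), ∀ d : ℕ, 0 < d → ∀ ε ∈ Set.Ioo (0:ℝ) 1,
    (nc d ε : ℝ) ≤ C * Real.exp (t * (1 + Real.log d) * (1 + Real.log ε⁻¹))}

/-- Exponential quasi-polynomial tractability. -/
def EXPQPT (nc : ℕ → ℝ → ℕ) : Prop :=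
  ∃ C > (0:ℝ), ∃ t ≥ (0:ℝ), ∀ d : ℕ, 0 < d → ∀ ε ∈ Set.Ioo (0:ℝ) 1,
    (nc d ε : ℝ) ≤ C * Real.exp (t * (1 + Real.log d) * (1 + Real.log (Real.log ε⁻¹ + 1)))

/-- The exponent of exponential quasi-polynomial tractability. -/
def EXPQPTexp (nc : ℕ → ℝ → ℕ) : ℝ :=
  sInf {t : ℝ | 0 ≤ t ∧ ∃ C > (0:ℝ), ∀ d : ℕ, 0 < d → ∀ ε ∈ Set.Ioo (0:ℝ) 1,
    (nc d ε : ℝ) ≤ C * Real.exp (t * (1 + Real.log d) * (1 + Real.log (Real.log ε⁻¹ + 1)))}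

/-- `lim_{ε⁻¹ + d → ∞} (log nc(d, ε)) / den(d, ε) = 0`. -/
def WTlim (den : ℕ → ℝ → ℝ) (nc : ℕ → ℝ → ℕ) : Prop :=
  ∀ δ > (0:ℝ), ∃ M : ℝ, ∀ d : ℕ, 0 < d → ∀ ε ∈ Set.Ioo (0:ℝ) 1,
    M ≤ ε⁻¹ + d → |Real.log (nc d ε) / den d ε| < δ

/-- Algebraic `(s,t)`-weak tractability; `ALGWTst 1 1` is algebraic weak tractability. -/
def ALGWTst (s t : ℝ) (nc : ℕ → ℝ → ℕ) : Prop :=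
  WTlim (fun d ε => ε ^ (-s) + (d : ℝ) ^ t) nc

/-- Algebraic uniform weak tractability. -/
def ALGUWT (nc : ℕ → ℝ → ℕ) : Prop := ∀ α > (0:ℝ), ∀ β > (0:ℝ), ALGWTst α β nc

/-- Exponential `(s,t)`-weak tractability; `EXPWTst 1 1` is exponential weak tractability. -/
def EXPWTst (s t : ℝ) (nc : ℕ → ℝ → ℕ) : Prop :=
  WTlim (fun d ε => (1 + Real.log ε⁻¹) ^ s + (d : ℝ) ^ t) nc

/-- Exponential uniform weak tractability. -/
def EXPUWT (nc : ℕ → ℝ → ℕ) : Prop := ∀ α > (0:ℝ), ∀ β > (0:ℝ), EXPWTst α β nc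

/-! Point evaluation at `x` is the inner product with `K_x = (conj e_k(x) / ω k)_k ∈ ℓ²`, so
standard information is linear information and `n(ε; Λ^all) ≤ n(ε; Λ^std)`, provided the minimum
defining `n(ε; Λ^std)` is attained rather than being the junk value `sInf ∅ = 0`. It is attained
because `x ↦ K_x` is continuous on the compact cube: finitely many `K_{p_i}` form a `δ`-net, and
returning the value at the nearest `p_i` errs by at most `δ` on the unit ball.

For the upper bounds, a quasi-polynomial bound with exponent `t` for `Λ^all`, evaluated at
`ε / c₂`, becomes one with exponent `κ t` for `Λ^std` because
`1 + ln (c₂/ε) ≤ (1 + ln c₂)(1 + ln ε⁻¹)` and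
`1 + ln (ln (c₂/ε) + 1) ≤ (1 + ln (ln c₂ + 1))(1 + ln (ln ε⁻¹ + 1))`. -/

open scoped ComplexConjugate InnerProductSpace Pointwise Topology

section Kernel

variable {d : ℕ} {ω : (Fin d → ℤ) → ℝ}

def fourierChar (k : Fin d → ℤ) (x : Fin d → ℝ) : ℂ :=
  Complex.exp (2 * Real.pi * Complex.I * ∑ j, (k j : ℂ) * (x j : ℂ))

lemma norm_fourierChar (k : Fin d → ℤ) (x : Fin d → ℝ) : ‖fourierChar k x‖ = 1 := by
  simp [fourierChar, Complex.norm_exp, Complex.re_sum]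

lemma continuous_fourierChar (k : Fin d → ℤ) : Continuous (fourierChar k) := by
  unfold fourierChar; fun_prop

def kernelCoeff (ω : (Fin d → ℤ) → ℝ) (x : Fin d → ℝ) (k : Fin d → ℤ) : ℂ :=
  (ω k : ℂ)⁻¹ * conj (fourierChar k x)

lemma norm_kernelCoeff (x : Fin d → ℝ) (k : Fin d → ℤ) : ‖kernelCoeff ω x k‖ = |ω k|⁻¹ := by
  simp [kernelCoeff, norm_fourierChar]

lemma norm_kernelCoeff_sq (x : Fin d → ℝ) (k : Fin d → ℤ) :
    ‖kernelCoeff ω x k‖ ^ 2 = ((ω k) ^ 2)⁻¹ := by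
  rw [norm_kernelCoeff, inv_pow, sq_abs]

lemma memℓp_kernelCoeff (hsum : Summable fun k => ((ω k) ^ 2)⁻¹) (x : Fin d → ℝ) :
    Memℓp (kernelCoeff ω x) 2 :=
  memℓp_gen (by simpa [norm_kernelCoeff_sq] using hsum)

def kernel (hsum : Summable fun k => ((ω k) ^ 2)⁻¹) (x : Fin d → ℝ) : Coef d :=
  ⟨kernelCoeff ω x, memℓp_kernelCoeff hsum x⟩

variable (hsum : Summable fun k => ((ω k) ^ 2)⁻¹)
include hsum

lemma torusFn_eq_inner_kernel (u : Coef d) (x : Fin d → ℝ) :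
    torusFn ω u x = ⟪kernel hsum x, u⟫_ℂ := by
  rw [lp.inner_eq_tsum]
  refine tsum_congr fun k => ?_
  simp [kernel, kernelCoeff, fourierChar]
  ring

lemma norm_sq_kernel_sub_kernel (x y : Fin d → ℝ) :
    ‖kernel hsum x - kernel hsum y‖ ^ 2 = ∑' k, ‖kernelCoeff ω x k - kernelCoeff ω y k‖ ^ 2 := by
  have := lp.norm_rpow_eq_tsum (p := 2) (by norm_num) (kernel hsum x - kernel hsum y)
  norm_num at this
  exact this

lemma continuous_kernel : Continuous (kernel hsum) := by
  refine continuous_iff_continuousAt.2 fun y => ?_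
  have hsq : Tendsto (fun x => ‖kernel hsum x - kernel hsum y‖ ^ 2) (𝓝 y) (𝓝 0) := by
    simp_rw [norm_sq_kernel_sub_kernel hsum]
    have hbound (x : Fin d → ℝ) (k : Fin d → ℤ) :
        ‖‖kernelCoeff ω x k - kernelCoeff ω y k‖ ^ 2‖ ≤ 4 * ((ω k) ^ 2)⁻¹ := by
      have := norm_sub_le (kernelCoeff ω x k) (kernelCoeff ω y k)
      rw [norm_kernelCoeff, norm_kernelCoeff] at this
      rw [norm_pow, norm_norm, ← sq_abs (ω k), ← inv_pow]
      nlinarith [norm_nonneg (kernelCoeff ω x k - kernelCoeff ω y k)]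
    have hterm (k : Fin d → ℤ) :
        Tendsto (fun x => ‖kernelCoeff ω x k - kernelCoeff ω y k‖ ^ 2) (𝓝 y) (𝓝 0) := by
      have : Continuous fun x => ‖kernelCoeff ω x k - kernelCoeff ω y k‖ ^ 2 := by
        unfold kernelCoeff; have := continuous_fourierChar k; fun_prop
      simpa using this.tendsto y
    simpa using tendsto_tsum_of_dominated_convergence (hsum.mul_left 4) hterm
      (Eventually.of_forall hbound)
  have hnorm := (Real.continuous_sqrt.tendsto 0).comp hsq
  simp only [Function.comp_def, Real.sqrt_sq (norm_nonneg _), Real.sqrt_zero] at hnorm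
  exact tendsto_iff_norm_sub_tendsto_zero.2 hnorm

lemma norm_torusFn_sub_le (u : Coef d) (x y : Fin d → ℝ) :
    ‖torusFn ω u x - torusFn ω u y‖ ≤ dist (kernel hsum x) (kernel hsum y) * ‖u‖ := by
  rw [torusFn_eq_inner_kernel hsum, torusFn_eq_inner_kernel hsum, ← inner_sub_left, dist_eq_norm]
  exact norm_inner_le_norm _ _

lemma stdInfo_subset_allInfo : stdInfo ω ⊆ allInfo d := by
  rintro L ⟨x, -, rfl⟩
  exact ⟨innerSL ℂ (kernel hsum x), funext fun u => torusFn_eq_inner_kernel hsum u x⟩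

end Kernel

lemma IsCompact.exists_finite_net {X Y : Type*} [TopologicalSpace X] [PseudoMetricSpace Y]
    {s : Set X} (hs : IsCompact s) {f : X → Y} (hf : Continuous f) {δ : ℝ} (hδ : 0 < δ) :
    ∃ (n : ℕ) (p : Fin n → X), (∀ i, p i ∈ s) ∧ ∀ x ∈ s, ∃ i, dist (f x) (f (p i)) < δ := by
  obtain ⟨t, hts, hcover⟩ := hs.elim_nhds_subcover (fun y => f ⁻¹' Metric.ball (f y) δ)
    fun y _ => hf.continuousAt.preimage_mem_nhds (Metric.ball_mem_nhds _ hδ)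
  refine ⟨t.card, fun i => t.equivFin.symm i, fun i => hts _ (t.equivFin.symm i).2,
    fun x hx => ?_⟩
  obtain ⟨y, hy, hxy⟩ := Set.mem_iUnion₂.1 (hcover hx)
  exact ⟨t.equivFin ⟨y, hy⟩, by simpa using hxy⟩

lemma isCompact_cube (d : ℕ) : IsCompact (cube d) := by
  convert isCompact_Icc (a := (0 : Fin d → ℝ)) (b := 1)
  ext x
  simp [cube, Pi.le_def, forall_and]

lemma zero_mem_cube (d : ℕ) : (0 : Fin d → ℝ) ∈ cube d := fun _ => ⟨le_rfl, zero_le_one⟩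

section Complexity

variable {d : ℕ} {ω : (Fin d → ℤ) → ℝ}

lemma wcErr_anti {Λ Λ' : Set (Coef d → ℂ)} (h : Λ ⊆ Λ') (n : ℕ) :
    wcErr ω Λ' n ≤ wcErr ω Λ n :=
  le_iInf₂ fun L hL => iInf₂_le_of_le L (fun i => h (hL i)) le_rfl

variable (hsum : Summable fun k => ((ω k) ^ 2)⁻¹)
include hsum

lemma wcErr_stdInfo_le_of_net {n : ℕ} {δ : ℝ} (p : Fin n → Fin d → ℝ) (hp : ∀ i, p i ∈ cube d)
    (hnet : ∀ x ∈ cube d, ∃ i, dist (kernel hsum x) (kernel hsum (p i)) < δ) :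
    wcErr ω (stdInfo ω) n ≤ ENNReal.ofReal δ := by
  classical
  choose σ hσ using hnet
  refine iInf₂_le_of_le (fun i u => torusFn ω u (p i)) (fun i => ⟨p i, hp i, rfl⟩) ?_
  refine iInf_le_of_le (fun c x => if hx : x ∈ cube d then c (σ x hx) else 0) ?_
  refine iSup₂_le fun u hu => iSup₂_le fun x hx => ?_
  simp only [dif_pos hx]
  rw [← ENNReal.ofReal_coe_nnreal, coe_nnnorm]
  refine ENNReal.ofReal_le_ofReal ((norm_torusFn_sub_le hsum u x _).trans ?_)
  exact (mul_le_of_le_one_right dist_nonneg hu).trans (hσ x hx).le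

lemma exists_wcErr_stdInfo_le {δ : ℝ} (hδ : 0 < δ) :
    ∃ n, wcErr ω (stdInfo ω) n ≤ ENNReal.ofReal δ := by
  obtain ⟨n, p, hp, hnet⟩ := (isCompact_cube d).exists_finite_net (continuous_kernel hsum) hδ
  exact ⟨n, wcErr_stdInfo_le_of_net hsum p hp hnet⟩

lemma initErr_pos {k : Fin d → ℤ} (hk : ω k ≠ 0) : 0 < initErr ω := by
  have hval : ‖torusFn ω (lp.single 2 k 1) 0‖ = |ω k|⁻¹ := by
    rw [torusFn_eq_inner_kernel hsum, lp.inner_single_right]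
    simpa [kernel] using norm_kernelCoeff (ω := ω) 0 k
  have hle : (‖torusFn ω (lp.single 2 k 1) 0‖₊ : ℝ≥0∞) ≤ initErr ω :=
    le_iSup₂_of_le (lp.single 2 k 1) (by simp [lp.norm_single])
      (le_iSup₂_of_le 0 (zero_mem_cube d) le_rfl)
  refine lt_of_lt_of_le ?_ hle
  rw [← ENNReal.ofReal_coe_nnreal, coe_nnnorm, hval]
  simpa using hk

lemma ofReal_mul_CRI_pos {k : Fin d → ℤ} (hk : ω k ≠ 0) (crit : Crit) {ε : ℝ} (hε : 0 < ε) :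
    0 < ENNReal.ofReal ε * CRI ω crit := by
  cases crit with
  | ABS => simpa [CRI] using hε
  | NOR => exact ENNReal.mul_pos (ENNReal.ofReal_pos.2 hε).ne' (initErr_pos hsum hk).ne'

lemma infoComp_allInfo_le_stdInfo {k : Fin d → ℤ} (hk : ω k ≠ 0) (crit : Crit) {ε : ℝ}
    (hε : 0 < ε) : infoComp ω (allInfo d) crit ε ≤ infoComp ω (stdInfo ω) crit ε := by
  obtain ⟨δ, -, hδpos, hδle⟩ :=
    ENNReal.lt_iff_exists_real_btwn.1 (ofReal_mul_CRI_pos hsum hk crit hε)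
  obtain ⟨n, hn⟩ := exists_wcErr_stdInfo_le hsum (ENNReal.ofReal_pos.1 hδpos)
  have hne : {n | wcErr ω (stdInfo ω) n ≤ ENNReal.ofReal ε * CRI ω crit}.Nonempty :=
    ⟨n, hn.trans hδle.le⟩
  exact Nat.sInf_le ((wcErr_anti (stdInfo_subset_allInfo hsum) _).trans (Nat.sInf_mem hne))

end Complexity

lemma Real.sInf_le_sInf_and_sInf_le_mul_sInf {S T : Set ℝ} {κ : ℝ} (hκ : 0 ≤ κ)
    (hT : ∀ t ∈ T, 0 ≤ t) (hST : S ⊆ T) (hTS : κ • T ⊆ S) :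
    sInf T ≤ sInf S ∧ sInf S ≤ κ * sInf T := by
  rcases T.eq_empty_or_nonempty with rfl | hTne
  · simp [Set.subset_empty_iff.1 hST]
  have hbdd : BddBelow T := ⟨0, hT⟩
  refine ⟨csInf_le_csInf hbdd (hTne.smul_set.mono hTS) hST, ?_⟩
  rw [← smul_eq_mul, ← Real.sInf_smul_of_nonneg hκ]
  exact csInf_le_csInf (hbdd.mono hST) hTne.smul_set hTS

def qptExponents (g : ℝ → ℝ) (nc : ℕ → ℝ → ℕ) : Set ℝ :=
  {t | 0 ≤ t ∧ ∃ C > (0:ℝ), ∀ d : ℕ, 0 < d → ∀ ε ∈ Set.Ioo (0:ℝ) 1,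
    (nc d ε : ℝ) ≤ C * Real.exp (t * (1 + Real.log d) * (1 + g ε))}

lemma ALGQPTexp_eq_sInf_qptExponents (nc : ℕ → ℝ → ℕ) :
    ALGQPTexp nc = sInf (qptExponents (fun ε => Real.log ε⁻¹) nc) := rfl

lemma EXPQPTexp_eq_sInf_qptExponents (nc : ℕ → ℝ → ℕ) :
    EXPQPTexp nc = sInf (qptExponents (fun ε => Real.log (Real.log ε⁻¹ + 1)) nc) := rfl

section Exponents

variable {g : ℝ → ℝ} {nc nc' : ℕ → ℝ → ℕ}

lemma qptExponents_anti (h : ∀ d, 0 < d → ∀ ε ∈ Set.Ioo (0:ℝ) 1, nc d ε ≤ nc' d ε) :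
    qptExponents g nc' ⊆ qptExponents g nc := by
  rintro t ⟨ht, C, hC, hbound⟩
  exact ⟨ht, C, hC, fun d hd ε hε => (Nat.cast_le.2 (h d hd ε hε)).trans (hbound d hd ε hε)⟩

lemma smul_qptExponents_subset {K c κ : ℝ} (hK : 0 ≤ K) (hc : 1 ≤ c) (hκ : 0 ≤ κ)
    (hg : ∀ ε ∈ Set.Ioo (0:ℝ) 1, 1 + g (ε / c) ≤ κ * (1 + g ε))
    (h : ∀ d, 0 < d → ∀ ε ∈ Set.Ioo (0:ℝ) 1, (nc d ε : ℝ) ≤ K * nc' d (ε / c)) :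
    κ • qptExponents g nc' ⊆ qptExponents g nc := by
  rintro _ ⟨t, ⟨ht, C, hC, hbound⟩, rfl⟩
  refine ⟨mul_nonneg hκ ht, (K + 1) * C, by positivity, fun d hd ε hε => ?_⟩
  have hεc : ε / c ∈ Set.Ioo (0:ℝ) 1 :=
    ⟨div_pos hε.1 (by linarith), (div_lt_one (by linarith)).2 (by linarith [hε.2])⟩
  have hlog : 0 ≤ 1 + Real.log d := by
    have := Real.log_nonneg (Nat.one_le_cast.2 hd); linarith
  have hexp : t * (1 + Real.log d) * (1 + g (ε / c)) ≤ κ • t * (1 + Real.log d) * (1 + g ε) := by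
    calc t * (1 + Real.log d) * (1 + g (ε / c))
        ≤ t * (1 + Real.log d) * (κ * (1 + g ε)) := by gcongr; exact hg ε hε
      _ = κ • t * (1 + Real.log d) * (1 + g ε) := by rw [smul_eq_mul]; ring
  calc (nc d ε : ℝ) ≤ K * nc' d (ε / c) := h d hd ε hε
    _ ≤ K * (C * Real.exp (t * (1 + Real.log d) * (1 + g (ε / c)))) := by
        gcongr; exact hbound d hd _ hεc
    _ ≤ (K + 1) * (C * Real.exp (κ • t * (1 + Real.log d) * (1 + g ε))) := by
        gcongr; linarith
    _ = (K + 1) * C * Real.exp (κ • t * (1 + Real.log d) * (1 + g ε)) := (mul_assoc _ _ _).symm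

lemma sInf_qptExponents_le_and_le {K c κ : ℝ} (hK : 0 ≤ K) (hc : 1 ≤ c) (hκ : 0 ≤ κ)
    (hg : ∀ ε ∈ Set.Ioo (0:ℝ) 1, 1 + g (ε / c) ≤ κ * (1 + g ε))
    (hle : ∀ d, 0 < d → ∀ ε ∈ Set.Ioo (0:ℝ) 1, nc' d ε ≤ nc d ε)
    (h : ∀ d, 0 < d → ∀ ε ∈ Set.Ioo (0:ℝ) 1, (nc d ε : ℝ) ≤ K * nc' d (ε / c)) :
    sInf (qptExponents g nc') ≤ sInf (qptExponents g nc) ∧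
      sInf (qptExponents g nc) ≤ κ * sInf (qptExponents g nc') :=
  Real.sInf_le_sInf_and_sInf_le_mul_sInf hκ (fun _ ht => ht.1) (qptExponents_anti hle)
    (smul_qptExponents_subset hK hc hκ hg h)

end Exponents

lemma Real.log_inv_div {ε c : ℝ} (hε : 0 < ε) (hc : 0 < c) :
    Real.log (ε / c)⁻¹ = Real.log c + Real.log ε⁻¹ := by
  rw [inv_div, Real.log_div hc.ne' hε.ne', Real.log_inv]; ring

lemma one_add_log_inv_div_le {ε c : ℝ} (hε : 0 < ε) (hε1 : ε ≤ 1) (hc : 1 ≤ c) :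
    1 + Real.log (ε / c)⁻¹ ≤ (1 + Real.log c) * (1 + Real.log ε⁻¹) := by
  have hL := Real.log_nonneg hc
  have ha := Real.log_nonneg (one_le_inv_iff₀.2 ⟨hε, hε1⟩)
  rw [Real.log_inv_div hε (by linarith)]
  nlinarith

lemma one_add_log_add_add_one_le {a b : ℝ} (ha : 0 ≤ a) (hb : 0 ≤ b) :
    1 + Real.log (a + b + 1) ≤ (1 + Real.log (a + 1)) * (1 + Real.log (b + 1)) := by
  have hla := Real.log_nonneg (by linarith : 1 ≤ a + 1)
  have hlb := Real.log_nonneg (by linarith : 1 ≤ b + 1)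
  have hsub : Real.log (a + b + 1) ≤ Real.log (a + 1) + Real.log (b + 1) := by
    rw [← Real.log_mul (by linarith) (by linarith)]
    exact Real.log_le_log (by linarith) (by nlinarith)
  nlinarith

lemma one_add_log_log_inv_div_le {ε c : ℝ} (hε : 0 < ε) (hε1 : ε ≤ 1) (hc : 1 ≤ c) :
    1 + Real.log (Real.log (ε / c)⁻¹ + 1) ≤
      (1 + Real.log (Real.log c + 1)) * (1 + Real.log (Real.log ε⁻¹ + 1)) := by
  rw [Real.log_inv_div hε (by linarith)]
  exact one_add_log_add_add_one_le (Real.log_nonneg hc)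
    (Real.log_nonneg (one_le_inv_iff₀.2 ⟨hε, hε1⟩))

theorem stmt8_general
    (ω : (d : ℕ) → (Fin d → ℤ) → ℝ)
    (hpos : ∀ d, 0 < d → ∀ k, 0 < ω d k)
    (hsum : ∀ d, 0 < d → Summable fun k => ((ω d k) ^ 2)⁻¹)
    (c₁ : ℕ) (c₂ : ℝ) (hc₂ : 1 < c₂)
    (crit : Crit)
    (hmain : ∀ d : ℕ, 0 < d → ∀ ε ∈ Set.Ioo (0:ℝ) 1,
      infoComp (ω d) (stdInfo (ω d)) crit ε ≤
        2 * c₁ * infoComp (ω d) (allInfo d) crit (ε / c₂)) :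
    (EXPQPTexp (fun d ε => infoComp (ω d) (allInfo d) crit ε) ≤
        EXPQPTexp (fun d ε => infoComp (ω d) (stdInfo (ω d)) crit ε) ∧
      EXPQPTexp (fun d ε => infoComp (ω d) (stdInfo (ω d)) crit ε) ≤
        (1 + Real.log (Real.log c₂ + 1)) *
          EXPQPTexp (fun d ε => infoComp (ω d) (allInfo d) crit ε)) ∧
    (ALGQPTexp (fun d ε => infoComp (ω d) (allInfo d) crit ε) ≤
        ALGQPTexp (fun d ε => infoComp (ω d) (stdInfo (ω d)) crit ε) ∧
      ALGQPTexp (fun d ε => infoComp (ω d) (stdInfo (ω d)) crit ε) ≤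
        (1 + Real.log c₂) *
          ALGQPTexp (fun d ε => infoComp (ω d) (allInfo d) crit ε)) := by
  have hle : ∀ d, 0 < d → ∀ ε ∈ Set.Ioo (0:ℝ) 1,
      infoComp (ω d) (allInfo d) crit ε ≤ infoComp (ω d) (stdInfo (ω d)) crit ε :=
    fun d hd ε hε => infoComp_allInfo_le_stdInfo (hsum d hd) (hpos d hd 0).ne' crit hε.1
  have hmain' : ∀ d, 0 < d → ∀ ε ∈ Set.Ioo (0:ℝ) 1,
      (infoComp (ω d) (stdInfo (ω d)) crit ε : ℝ) ≤
        (2 * c₁ : ℝ) * infoComp (ω d) (allInfo d) crit (ε / c₂) :=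
    fun d hd ε hε => by exact_mod_cast hmain d hd ε hε
  have hL := Real.log_nonneg hc₂.le
  simp only [EXPQPTexp_eq_sInf_qptExponents, ALGQPTexp_eq_sInf_qptExponents]
  exact ⟨sInf_qptExponents_le_and_le (by positivity) hc₂.le
      (add_nonneg zero_le_one (Real.log_nonneg (by linarith)))
      (fun ε hε => one_add_log_log_inv_div_le hε.1 hε.2.le hc₂.le) hle hmain',
    sInf_qptExponents_le_and_le (by positivity) hc₂.le (by linarith)
      (fun ε hε => one_add_log_inv_div_le hε.1 hε.2.le hc₂.le) hle hmain'⟩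

/-- If `c₂ > 1`, `c₁ ∈ ℕ` are constants with
`n^⋆(ε, d; Λ^std) ≤ 2 c₁ n^⋆(ε / c₂, d; Λ^all)`, then the exponents of quasi-polynomial
tractability satisfy `EXP-t⋆(Λ^all) ≤ EXP-t⋆(Λ^std) ≤ (1 + ln(ln c₂ + 1)) EXP-t⋆(Λ^all)`
and `ALG-t⋆(Λ^all) ≤ ALG-t⋆(Λ^std) ≤ (1 + ln c₂) ALG-t⋆(Λ^all)`. -/
theorem stmt8
    (ω : (d : ℕ) → (Fin d → ℤ) → ℝ)
    (hpos : ∀ d, 0 < d → ∀ k, 0 < ω d k)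
    (hsum : ∀ d, 0 < d → Summable fun k => ((ω d k) ^ 2)⁻¹)
    (c₁ : ℕ) (hc₁ : 0 < c₁) (c₂ : ℝ) (hc₂ : 1 < c₂)
    (crit : Crit)
    (hmain : ∀ d : ℕ, 0 < d → ∀ ε ∈ Set.Ioo (0:ℝ) 1,
      infoComp (ω d) (stdInfo (ω d)) crit ε ≤
        2 * c₁ * infoComp (ω d) (allInfo d) crit (ε / c₂)) :
    (EXPQPTexp (fun d ε => infoComp (ω d) (allInfo d) crit ε) ≤
        EXPQPTexp (fun d ε => infoComp (ω d) (stdInfo (ω d)) crit ε) ∧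
      EXPQPTexp (fun d ε => infoComp (ω d) (stdInfo (ω d)) crit ε) ≤
        (1 + Real.log (Real.log c₂ + 1)) *
          EXPQPTexp (fun d ε => infoComp (ω d) (allInfo d) crit ε)) ∧
    (ALGQPTexp (fun d ε => infoComp (ω d) (allInfo d) crit ε) ≤
        ALGQPTexp (fun d ε => infoComp (ω d) (stdInfo (ω d)) crit ε) ∧
      ALGQPTexp (fun d ε => infoComp (ω d) (stdInfo (ω d)) crit ε) ≤
        (1 + Real.log c₂) *
          ALGQPTexp (fun d ε => infoComp (ω d) (allInfo d) crit ε)) :=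
  stmt8_general ω hpos hsum c₁ c₂ hc₂ crit hmain
end
end

section
/- Let $P_m$ be the orthogonal projection $P_m(f) = \sum_{k=1}^m \langle f, e_{k,d} \rangle_{H(K_d)}\, e_{k,d}$. Then $\sup_{\|f\|_{H(K_d)} \leq 1} \|f - P_m f\|_{L_\infty(D_d)} \leq \sqrt{2 \sum_{k \geq \lfloor m/4 \rfloor} \frac{N_{\varrho_d}(4k)}{k}\, \sigma_{k,d}^2}$. -/
/-!
For `‖c‖_{ℓ²} ≤ 1`, Cauchy–Schwarz gives `|f(x) - P_m f(x)|² ≤ ∑_{p ≥ m} |e_p(x)|²`.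
Since `λ` is nonincreasing, each term `|e_p(x)|² = λ_p |η_p(x)|²` can be spread over the at least
`(p+1)/2` indices `k` with `k ≤ p + 1 ≤ 2k`, giving index `k` the weight `(2/k) λ_{k-1} |η_p(x)|²`.
Exchanging the sums, index `k` collects at most `(2/k) λ_{k-1} ∑_{p < 2k} |η_p(x)|² ≤ 2 λ_{k-1} N(4k) / k`,
and only `k > m/2` occur.
-/

open MeasureTheory
open scoped ENNReal NNReal ComplexConjugate

noncomputable section

/-- The function `f = ∑_k c_k e_k` of the reproducing kernel Hilbert space `H(K_d)`
determined by the orthonormal basis `{e_k}` (here `e j` is `e_{j+1}`) and the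
coefficients `c ∈ ℓ²`, so that `‖f‖_{H(K_d)} = ‖c‖_{ℓ²}`. -/
def rkhsFn {d : ℕ} {D : Set (Fin d → ℝ)} (e : ℕ → D → ℂ) (c : ℕ → ℂ) (x : D) : ℂ :=
  ∑' j : ℕ, c j * e j x

/-- `f = ∑_k c_k e_k` lies in the unit ball of `H(K_d)`, i.e. `∑_k |c_k|² ≤ 1`. -/
def unitBallCoeff (c : ℕ → ℂ) : Prop := ∀ F : Finset ℕ, ∑ j ∈ F, ‖c j‖ ^ 2 ≤ 1

/-- `N_{ϱ_d}(m) = sup_{x ∈ D} ∑_{k=1}^m |η_k(x)|²`, where `η_k = λ_k^{-1/2} e_k` are the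
singular functions (here `e j`, `lam j` are `e_{j+1}`, `λ_{j+1}`). -/
def christ {d : ℕ} {D : Set (Fin d → ℝ)} (lam : ℕ → ℝ) (e : ℕ → D → ℂ) (m : ℕ) : ℝ≥0∞ :=
  ⨆ x : D, ∑ j ∈ Finset.range m, ENNReal.ofReal (‖e j x‖ ^ 2 / lam j)

/-- The sampling numbers `g_n(I_{∞,d})`: the `n`-th minimal worst case error of
`L_∞`-approximation on the unit ball of `H(K_d)` using `n` function values. -/
def sampErr {d : ℕ} {D : Set (Fin d → ℝ)} (e : ℕ → D → ℂ) (n : ℕ) : ℝ≥0∞ :=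
  ⨅ (pts : Fin n → D) (φ : (Fin n → ℂ) → D → ℂ),
    ⨆ (c : ℕ → ℂ) (_ : unitBallCoeff c) (x : D),
      (‖rkhsFn e c x - φ (fun i => rkhsFn e c (pts i)) x‖₊ : ℝ≥0∞)

theorem ENNReal.inner_le_Lp_mul_Lq_tsum {ι : Type*} (f g : ι → ℝ≥0∞) {p q : ℝ}
    (hpq : p.HolderConjugate q) :
    ∑' i, f i * g i ≤ (∑' i, f i ^ p) ^ (1 / p) * (∑' i, g i ^ q) ^ (1 / q) := by
  rw [ENNReal.tsum_eq_iSup_sum]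
  refine iSup_le fun s => (ENNReal.inner_le_Lp_mul_Lq s f g hpq).trans ?_
  have hp := hpq.pos
  have hq := hpq.symm.pos
  gcongr <;> exact ENNReal.sum_le_tsum s

theorem unitBallCoeff.tsum_enorm_sq_le_one {c : ℕ → ℂ} (hc : unitBallCoeff c) :
    ∑' j, ‖c j‖ₑ ^ 2 ≤ 1 := by
  refine ENNReal.tsum_le_of_sum_range_le fun n => ?_
  simp only [← ofReal_norm, ← ENNReal.ofReal_pow (norm_nonneg _)]
  rw [← ENNReal.ofReal_sum_of_nonneg fun j _ => by positivity]
  exact ENNReal.ofReal_le_one.2 (hc _)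

theorem enorm_rkhsFn_sub_le {d : ℕ} {D : Set (Fin d → ℝ)} (e : ℕ → D → ℂ) (c c' : ℕ → ℂ)
    (x : D) (hc' : Summable fun j => c' j * e j x) :
    ‖rkhsFn e c x - rkhsFn e c' x‖ₑ ≤ ∑' j, ‖(c j - c' j) * e j x‖ₑ := by
  -- `rkhsFn e c x` is a junk `0` unless the series converges; a finite bound forces convergence.
  by_cases hfin : ∑' j, ‖(c j - c' j) * e j x‖ₑ = ∞
  · exact hfin ▸ le_top
  have hsum := Summable.of_enorm hfin
  have hsplit : rkhsFn e c x - rkhsFn e c' x = ∑' j, (c j - c' j) * e j x := by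
    rw [sub_eq_iff_eq_add, rkhsFn, rkhsFn, ← hsum.tsum_add hc']
    exact tsum_congr fun j => by ring
  exact hsplit ▸ enorm_tsum_le_tsum_enorm

theorem enorm_rkhsFn_sub_truncate_le {d : ℕ} {D : Set (Fin d → ℝ)} (e : ℕ → D → ℂ)
    {c : ℕ → ℂ} (hc : unitBallCoeff c) (m : ℕ) (x : D) :
    ‖rkhsFn e c x - rkhsFn e (fun j => if j < m then c j else 0) x‖ₑ ≤
      (∑' j, if j < m then 0 else ‖e j x‖ₑ ^ 2) ^ (1 / 2 : ℝ) := by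
  have htrunc : Summable fun j => (if j < m then c j else 0) * e j x :=
    summable_of_ne_finset_zero (s := Finset.range m) fun j hj => by simp_all
  set w : ℕ → ℂ := fun j => if j < m then 0 else e j x
  calc _ ≤ ∑' j, ‖c j‖ₑ * ‖w j‖ₑ := by
        refine (enorm_rkhsFn_sub_le e _ _ x htrunc).trans (le_of_eq (tsum_congr fun j => ?_))
        simp only [w]
        split_ifs <;> simp
    _ ≤ (∑' j, ‖c j‖ₑ ^ (2 : ℝ)) ^ (1 / 2 : ℝ) * (∑' j, ‖w j‖ₑ ^ (2 : ℝ)) ^ (1 / 2 : ℝ) :=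
        ENNReal.inner_le_Lp_mul_Lq_tsum _ _ .two_two
    _ ≤ 1 * (∑' j, if j < m then 0 else ‖e j x‖ₑ ^ 2) ^ (1 / 2 : ℝ) := by
        simp only [ENNReal.rpow_two]
        gcongr
        · exact ENNReal.rpow_le_one hc.tsum_enorm_sq_le_one (by norm_num)
        · simp only [w]; split_ifs <;> simp
    _ = _ := one_mul _

theorem one_le_tsum_two_div (p : ℕ) :
    1 ≤ ∑' k : ℕ, if k ≤ p + 1 ∧ p + 1 ≤ 2 * k then 2 / (k : ℝ≥0∞) else 0 := by
  set s := Finset.Icc ((p + 2) / 2) (p + 1)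
  have hcard : p + 1 ≤ 2 * s.card := by simp only [s, Nat.card_Icc]; omega
  calc (1 : ℝ≥0∞) ≤ s.card * (2 / ((p + 1 : ℕ) : ℝ≥0∞)) := by
        rw [← mul_div_assoc, ENNReal.le_div_iff_mul_le (by simp) (by simp), one_mul, mul_comm]
        exact_mod_cast hcard
    _ ≤ ∑ k ∈ s, if k ≤ p + 1 ∧ p + 1 ≤ 2 * k then 2 / (k : ℝ≥0∞) else 0 := by
        rw [← nsmul_eq_mul]
        refine Finset.card_nsmul_le_sum _ _ _ fun k hk => ?_
        rw [Finset.mem_Icc] at hk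
        rw [if_pos (by omega)]
        gcongr
        exact_mod_cast hk.2
    _ ≤ _ := ENNReal.sum_le_tsum s

theorem le_tsum_two_div_mul {lam : ℕ → ℝ} (hlam : ∀ j, 0 < lam j) (hmono : Antitone lam)
    (a : ℕ → ℝ≥0∞) (p : ℕ) :
    a p ≤ ∑' k : ℕ, if k ≤ p + 1 ∧ p + 1 ≤ 2 * k then
      2 / (k : ℝ≥0∞) * (ENNReal.ofReal (lam (k - 1)) * (a p / ENNReal.ofReal (lam p))) else 0 := by
  have hpos : ENNReal.ofReal (lam p) ≠ 0 := (ENNReal.ofReal_pos.2 (hlam p)).ne'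
  calc a p = 1 * (ENNReal.ofReal (lam p) * (a p / ENNReal.ofReal (lam p))) := by
        rw [one_mul, ENNReal.mul_div_cancel hpos ENNReal.ofReal_ne_top]
    _ ≤ (∑' k : ℕ, if k ≤ p + 1 ∧ p + 1 ≤ 2 * k then 2 / (k : ℝ≥0∞) else 0) *
          (ENNReal.ofReal (lam p) * (a p / ENNReal.ofReal (lam p))) := by
        gcongr; exact one_le_tsum_two_div p
    _ ≤ _ := by
        rw [← ENNReal.tsum_mul_right]
        refine ENNReal.tsum_le_tsum fun k => ?_
        split_ifs with hk
        · gcongr; exact hmono (by omega)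
        · simp

theorem tsum_two_div_mul_le {lam : ℕ → ℝ} {a N : ℕ → ℝ≥0∞} {m : ℕ}
    (hN : ∀ n, ∑ p ∈ Finset.range n, a p / ENNReal.ofReal (lam p) ≤ N n) (k : ℕ) :
    ∑' p : ℕ, (if m ≤ p ∧ k ≤ p + 1 ∧ p + 1 ≤ 2 * k then
      2 / (k : ℝ≥0∞) * (ENNReal.ofReal (lam (k - 1)) * (a p / ENNReal.ofReal (lam p))) else 0) ≤
    if max (m / 4) 1 ≤ k then
      2 / (k : ℝ≥0∞) * (ENNReal.ofReal (lam (k - 1)) * N (4 * k)) else 0 := by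
  split_ifs with hk
  · rw [tsum_eq_sum (s := Finset.range (2 * k)) fun p hp => if_neg (by simp at hp; omega)]
    calc _ ≤ ∑ p ∈ Finset.range (2 * k),
          2 / (k : ℝ≥0∞) * (ENNReal.ofReal (lam (k - 1)) * (a p / ENNReal.ofReal (lam p))) :=
          Finset.sum_le_sum fun p _ => by split_ifs <;> simp
      _ ≤ _ := by
          rw [← Finset.mul_sum, ← Finset.mul_sum]
          gcongr
          exact (Finset.sum_le_sum_of_subset (by gcongr; omega)).trans (hN (4 * k))
  · refine le_of_eq (ENNReal.tsum_eq_zero.2 fun p => if_neg ?_)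
    omega

theorem tsum_tail_le_tsum_christoffel {lam : ℕ → ℝ} (hlam : ∀ j, 0 < lam j)
    (hmono : Antitone lam) {a N : ℕ → ℝ≥0∞} (m : ℕ)
    (hN : ∀ n, ∑ p ∈ Finset.range n, a p / ENNReal.ofReal (lam p) ≤ N n) :
    ∑' p : ℕ, (if p < m then 0 else a p) ≤
      2 * ∑' j : ℕ, N (4 * (max (m / 4) 1 + j)) * ENNReal.ofReal (lam (max (m / 4) 1 + j - 1)) /
        ((max (m / 4) 1 + j : ℕ) : ℝ≥0∞) := by
  set K₁ := max (m / 4) 1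
  set G : ℕ → ℝ≥0∞ := fun k => 2 / (k : ℝ≥0∞) * (ENNReal.ofReal (lam (k - 1)) * N (4 * k))
  calc ∑' p : ℕ, (if p < m then 0 else a p)
      ≤ ∑' (p) (k), if m ≤ p ∧ k ≤ p + 1 ∧ p + 1 ≤ 2 * k then
          2 / (k : ℝ≥0∞) * (ENNReal.ofReal (lam (k - 1)) * (a p / ENNReal.ofReal (lam p)))
          else 0 := by
        refine ENNReal.tsum_le_tsum fun p => ?_
        split_ifs with hp
        · exact zero_le
        · simpa [not_lt.1 hp] using le_tsum_two_div_mul hlam hmono a p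
    _ = ∑' (k) (p), if m ≤ p ∧ k ≤ p + 1 ∧ p + 1 ≤ 2 * k then
          2 / (k : ℝ≥0∞) * (ENNReal.ofReal (lam (k - 1)) * (a p / ENNReal.ofReal (lam p)))
          else 0 := ENNReal.tsum_comm
    _ ≤ ∑' k, if K₁ ≤ k then G k else 0 := ENNReal.tsum_le_tsum (tsum_two_div_mul_le hN)
    _ = ∑' j, G (j + K₁) := by
        rw [← ENNReal.summable.sum_add_tsum_nat_add',
          Finset.sum_eq_zero fun k hk => if_neg (by simpa using hk), zero_add]
        exact tsum_congr fun j => if_pos (by omega)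
    _ = _ := by
        rw [← ENNReal.tsum_mul_left]
        refine tsum_congr fun j => ?_
        simp only [G, div_eq_mul_inv, add_comm j]
        ring

theorem stmt11_general
    (d : ℕ)
    (D : Set (Fin d → ℝ))
    (lam : ℕ → ℝ) (e : ℕ → D → ℂ)
    (hlam : ∀ j, 0 < lam j) (hmono : Antitone lam)
    (m : ℕ) :
    (⨆ (c : ℕ → ℂ) (_ : unitBallCoeff c) (x : D),
        (‖rkhsFn e c x - rkhsFn e (fun j => if j < m then c j else 0) x‖₊ : ℝ≥0∞)) ≤
      (2 * ∑' j : ℕ, christ lam e (4 * (max (m / 4) 1 + j)) *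
        ENNReal.ofReal (lam (max (m / 4) 1 + j - 1)) /
        ((max (m / 4) 1 + j : ℕ) : ℝ≥0∞)) ^ (1 / 2 : ℝ) := by
  refine iSup₂_le fun c hc => iSup_le fun x => ?_
  refine (enorm_rkhsFn_sub_truncate_le e hc m x).trans (ENNReal.rpow_le_rpow ?_ (by norm_num))
  refine tsum_tail_le_tsum_christoffel hlam hmono m fun n =>
    le_iSup_of_le x (Finset.sum_le_sum fun p _ => le_of_eq ?_)
  rw [ENNReal.ofReal_div_of_pos (hlam p), ENNReal.ofReal_pow (norm_nonneg _), ofReal_norm]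

/-- With `P_m f = ∑_{k=1}^m ⟨f, e_k⟩_{H(K_d)} e_k` the orthogonal
projection (acting on coefficients as truncation to `k ≤ m`),
`sup_{‖f‖_{H(K_d)} ≤ 1} ‖f - P_m f‖_∞ ≤ √(2 ∑_{k ≥ ⌊m/4⌋} N_ϱ(4k) σ_k² / k)`
(sum over positive integers `k`, written via `K₁ = max(⌊m/4⌋, 1)`). -/
theorem stmt11
    (d : ℕ) (hd : 0 < d)
    (D : Set (Fin d → ℝ)) (hDc : IsCompact D) (hDne : D.Nonempty)
    (μ : Measure D) [IsProbabilityMeasure μ]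
    (hfull : ∀ U : Set D, IsOpen U → U.Nonempty → 0 < μ U)
    (K : D → D → ℂ) (hKcont : Continuous (fun p : D × D => K p.1 p.2))
    (lam : ℕ → ℝ) (e : ℕ → D → ℂ)
    (hlam : ∀ j, 0 < lam j) (hmono : Antitone lam) (hecont : ∀ j, Continuous (e j))
    (hrepr : ∀ x y : D, HasSum (fun j => e j x * conj (e j y)) (K x y))
    (hbd : ∃ B : ℝ, ∀ x : D, ‖K x x‖ ≤ B)
    (horth : ∀ j l : ℕ, ∫ x, e j x * conj (e l x) ∂μ = if j = l then (lam j : ℂ) else 0)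
    (m : ℕ) (hm : 0 < m) :
    (⨆ (c : ℕ → ℂ) (_ : unitBallCoeff c) (x : D),
        (‖rkhsFn e c x - rkhsFn e (fun j => if j < m then c j else 0) x‖₊ : ℝ≥0∞)) ≤
      (2 * ∑' j : ℕ, christ lam e (4 * (max (m / 4) 1 + j)) *
        ENNReal.ofReal (lam (max (m / 4) 1 + j - 1)) /
        ((max (m / 4) 1 + j : ℕ) : ℝ≥0∞)) ^ (1 / 2 : ℝ) :=
  stmt11_general d D lam e hlam hmono m
end
end
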